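/- Let θ be an endomorphism of G with matrix (α, β, γ, δ) such that α is bijective and Δ := det_K(θ) is bijective, so that θ is bijective and θ⁻¹ is an endomorphism of G whose matrix (α', β', γ', δ') has δ' = Δ⁻¹ bijective. Then the H-determinant of θ⁻¹ equals α⁻¹; that is, α'(h) · (β'(Δ(γ'(h))))⁻¹ = α⁻¹(h) for all h ∈ H. -/

import Mathlib

/-!
The map `θ'` applied to `(h, Δ(γ' h)⁻¹)` lands in `H`: since `δ' ∘ Δ = id`, the two factors
`θ'(h, 1) = (α' h, γ' h)` and `θ'(1, Δ(γ' h)) = (β' (Δ (γ' h)), γ' h)` have the same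
`K`-component, so `θ'(h, Δ(γ' h)⁻¹) = (α' h · β'(Δ(γ' h))⁻¹, 1)`. Applying `θ`, whose restriction
to `H` has `H`-component `α`, gives back `h`. That `Δ` is a left inverse of `δ'` (and hence,
being injective, a two-sided one) comes from comparing the two components of
`θ(1, δ' k) = θ((β' k)⁻¹, 1) · θ(θ'(1, k)) = (α x, γ x · k)` with `x = (β' k)⁻¹`.
-/

open Function

namespace SemidirectProduct

variable {N G : Type*} [Group N] [Group G] {φ : G →* MulAut N}

theorem mk_mul_inv_mk_of_right_eq (a b : N) (g : G) :
    (⟨a, g⟩ : N ⋊[φ] G) * (⟨b, g⟩ : N ⋊[φ] G)⁻¹ = inl (a * b⁻¹) := by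
  ext <;> simp

end SemidirectProduct

open SemidirectProduct

section Determinants

variable {H K : Type*} [Group H] [Group K] {f : K →* MulAut H}

/- The paper's `det_K` and `det_H`, with the inverses `α⁻¹` and `δ⁻¹` passed as `αi` and `δi`. -/
def detK (αi : H → H) (β : K → H) (γ : H → K) (δ : K → K) : K → K :=
  fun k => (γ (αi (β k)))⁻¹ * δ k

def detH (α : H → H) (β : K → H) (δi : K → K) (γ : H → K) : H → H :=
  fun h => α h * (β (δi (γ h)))⁻¹

variable {θ θ' : H ⋊[f] K →* H ⋊[f] K}

theorem leftInverse_detK (hθθ' : RightInverse θ' θ)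
    {α : H → H} {β : K → H} {γ : H → K} {δ : K → K} {β' : K → H} {δ' : K → K}
    (hθH : ∀ h : H, θ (inl h) = ⟨α h, γ h⟩) (hθK : ∀ k : K, θ (inr k) = ⟨β k, δ k⟩)
    (hθ'K : ∀ k : K, θ' (inr k) = ⟨β' k, δ' k⟩) {αi : H → H} (hαi : LeftInverse αi α) :
    LeftInverse (detK αi β γ δ) δ' := by
  intro k
  set x := (β' k)⁻¹
  have hinr : inr (δ' k) = inl x * θ' (inr k) := by
    rw [hθ'K, mk_eq_inl_mul_inr, ← mul_assoc, map_inv, inv_mul_cancel, one_mul]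
  have hθinr : θ (inr (δ' k)) = ⟨α x, γ x * k⟩ := by
    rw [hinr, map_mul, hθθ', hθH]
    ext <;> simp
  rw [hθK] at hθinr
  have hβ : β (δ' k) = α x := congrArg left hθinr
  have hδ : δ (δ' k) = γ x * k := congrArg right hθinr
  simp only [detK, hβ, hαi x, hδ, inv_mul_cancel_left]

theorem detH_eq_of_rightInverse (hθθ' : RightInverse θ' θ)
    {α : H → H} {γ : H → K} {α' : H → H} {β' : K → H} {γ' : H → K} {δ' : K → K}
    (hθH : ∀ h : H, θ (inl h) = ⟨α h, γ h⟩) (hθ'H : ∀ h : H, θ' (inl h) = ⟨α' h, γ' h⟩)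
    (hθ'K : ∀ k : K, θ' (inr k) = ⟨β' k, δ' k⟩) {αi : H → H} (hαi : LeftInverse αi α)
    {Δ : K → K} (hδ'Δ : LeftInverse δ' Δ) (h : H) :
    detH α' β' Δ γ' h = αi h := by
  set k := Δ (γ' h)
  have hθ' : θ' ⟨h, k⁻¹⟩ = inl (detH α' β' Δ γ' h) := by
    rw [mk_eq_inl_mul_inr, map_mul, map_inv, map_inv, hθ'H, hθ'K, hδ'Δ]
    exact mk_mul_inv_mk_of_right_eq _ _ _
  have hθθ'h := hθθ' ⟨h, k⁻¹⟩
  rw [hθ', hθH] at hθθ'h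
  have hα : α (detH α' β' Δ γ' h) = h := congrArg left hθθ'h
  exact (hαi _).symm.trans (congrArg αi hα)

end Determinants

theorem detH_of_inverse_general
    {H K : Type*} [Group H] [Group K] (f : K →* MulAut H)
    (θ θ' : (H ⋊[f] K) →* (H ⋊[f] K))
    (hinv' : Function.RightInverse θ' θ)
    (α : H → H) (β : K → H) (γ : H → K) (δ : K → K)
    (hθH : ∀ h : H, θ ⟨h, 1⟩ = ⟨α h, γ h⟩)
    (hθK : ∀ k : K, θ ⟨1, k⟩ = ⟨β k, δ k⟩)
    (α' : H → H) (β' : K → H) (γ' : H → K) (δ' : K → K)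
    (hθ'H : ∀ h : H, θ' ⟨h, 1⟩ = ⟨α' h, γ' h⟩)
    (hθ'K : ∀ k : K, θ' ⟨1, k⟩ = ⟨β' k, δ' k⟩)
    (αi : H → H)
    (hαi : Function.LeftInverse αi α)
    (hΔ : Function.Bijective (fun k : K => (γ (αi (β k)))⁻¹ * δ k)) :
    ∀ h : H, α' h * (β' ((γ (αi (β (γ' h))))⁻¹ * δ (γ' h)))⁻¹ = αi h := by
  have hδ'Δ : LeftInverse δ' (detK αi β γ δ) :=
    (leftInverse_detK hinv' hθH hθK hθ'K hαi).rightInverse_of_injective hΔ.injective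
  exact detH_eq_of_rightInverse hinv' hθH hθ'H hθ'K hαi hδ'Δ

/-- Let `θ` be an endomorphism of `G = H ⋊[f] K` with matrix
`(α, β, γ, δ)` such that `α` is bijective (with two-sided inverse `αi`) and the
`K`-determinant `Δ k = (γ (αi (β k)))⁻¹ * δ k` is bijective, so that `θ` is
bijective with inverse the endomorphism `θ'` whose matrix is `(α', β', γ', δ')`
(and `δ' = Δ⁻¹` is bijective).  Then the `H`-determinant of `θ'` equals `α⁻¹`:
`α' h * (β' (Δ (γ' h)))⁻¹ = αi h` for all `h`. -/
theorem detH_of_inverse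
    {H K : Type*} [Group H] [Group K] (f : K →* MulAut H)
    (θ θ' : (H ⋊[f] K) →* (H ⋊[f] K))
    (hinv : Function.LeftInverse θ' θ) (hinv' : Function.RightInverse θ' θ)
    (α : H → H) (β : K → H) (γ : H → K) (δ : K → K)
    (hθH : ∀ h : H, θ ⟨h, 1⟩ = ⟨α h, γ h⟩)
    (hθK : ∀ k : K, θ ⟨1, k⟩ = ⟨β k, δ k⟩)
    (α' : H → H) (β' : K → H) (γ' : H → K) (δ' : K → K)
    (hθ'H : ∀ h : H, θ' ⟨h, 1⟩ = ⟨α' h, γ' h⟩)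
    (hθ'K : ∀ k : K, θ' ⟨1, k⟩ = ⟨β' k, δ' k⟩)
    (αi : H → H)
    (hαi : Function.LeftInverse αi α) (hαi' : Function.RightInverse αi α)
    (hΔ : Function.Bijective (fun k : K => (γ (αi (β k)))⁻¹ * δ k)) :
    ∀ h : H, α' h * (β' ((γ (αi (β (γ' h))))⁻¹ * δ (γ' h)))⁻¹ = αi h :=
  detH_of_inverse_general f θ θ' hinv' α β γ δ hθH hθK α' β' γ' δ' hθ'H hθ'K αi hαi hΔ
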